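/- arXiv:1103.4550 — 6 statements merged into one kernel-verified Lean document; each statement's English description precedes it below -/
import Mathlib

section
/- Let G = (V,E) be a finite simple undirected graph, ℓ a labeling, v a vertex, and l a label with c_ℓ(v,l) > c_ℓ(v,ℓ(v)). If ℓ' is the labeling that agrees with ℓ on all vertices except that ℓ'(v) = l, then f(ℓ') > f(ℓ): updating a single vertex to a label strictly more frequent among its neighbors than its current label strictly increases the number of monochromatic edges. -/
/-!
Monochromatic edges not containing `v` are unaffected by relabeling `v`, while those containing
`v` correspond to the neighbors of `v` sharing its label. Hence relabeling `v` to `l` changes the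
number of monochromatic edges by exactly `c(v, l) - c(v, ℓ v)`.
-/

/-- The number of neighbors of `v` that carry label `l` under the labeling `ℓ`. -/
def nbrCount {V : Type*} [Fintype V] [DecidableEq V] {L : Type*} [DecidableEq L]
    (G : SimpleGraph V) [DecidableRel G.Adj] (ℓ : V → L) (v : V) (l : L) : ℕ :=
  ((G.neighborFinset v).filter fun u => ℓ u = l).card

/-- The number of monochromatic edges of `G` under the labeling `ℓ`. -/
def monoCount {V : Type*} [Fintype V] [DecidableEq V] {L : Type*} [DecidableEq L]
    (G : SimpleGraph V) [DecidableRel G.Adj] (ℓ : V → L) : ℕ :=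
  (G.edgeFinset.filter fun e =>
      Sym2.lift ⟨fun a b => decide (ℓ a = ℓ b),
        fun a b => decide_eq_decide.mpr eq_comm⟩ e = true).card

open Finset SimpleGraph

section

variable {V L : Type*} [DecidableEq L]

/-- The predicate that `monoCount` filters on. -/
def monoEdge (ℓ : V → L) : Sym2 V → Bool :=
  Sym2.lift ⟨fun a b => decide (ℓ a = ℓ b), fun _ _ => decide_eq_decide.mpr eq_comm⟩

@[simp]
lemma monoEdge_mk (ℓ : V → L) (a b : V) : monoEdge ℓ s(a, b) = decide (ℓ a = ℓ b) := rfl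

lemma monoEdge_update_of_notMem [DecidableEq V] (ℓ : V → L) {v : V} (l : L) {e : Sym2 V}
    (hv : v ∉ e) : monoEdge (Function.update ℓ v l) e = monoEdge ℓ e := by
  induction e using Sym2.inductionOn with
  | hf a b =>
    rw [Sym2.mem_iff, not_or] at hv
    simp only [monoEdge_mk, Function.update_of_ne (Ne.symm hv.1),
      Function.update_of_ne (Ne.symm hv.2)]

variable [Fintype V] [DecidableEq V] (G : SimpleGraph V) [DecidableRel G.Adj]

lemma nbrCount_update_self (ℓ : V → L) (v : V) (l l' : L) :
    nbrCount G (Function.update ℓ v l) v l' = nbrCount G ℓ v l' := by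
  refine congrArg card (filter_congr fun u hu => ?_)
  rw [Function.update_of_ne (G.ne_of_adj ((G.mem_neighborFinset v u).mp hu)).symm]

lemma filter_monoEdge_incidenceFinset (ℓ : V → L) (v : V) :
    {e ∈ G.incidenceFinset v | monoEdge ℓ e} =
      {u ∈ G.neighborFinset v | ℓ u = ℓ v}.map (Sym2.mkEmbedding v) := by
  ext e
  simp only [mem_filter, mem_incidenceFinset, mem_map, mem_neighborFinset,
    Sym2.mkEmbedding_apply]
  constructor
  · induction e using Sym2.inductionOn with
    | hf a b =>
      rintro ⟨⟨hab, hv⟩, hmono⟩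
      rw [monoEdge_mk, decide_eq_true_eq] at hmono
      rcases Sym2.mem_iff.mp hv with rfl | rfl
      · exact ⟨b, ⟨hab, hmono.symm⟩, rfl⟩
      · exact ⟨a, ⟨hab.symm, hmono⟩, Sym2.eq_swap⟩
  · rintro ⟨u, ⟨hvu, hu⟩, rfl⟩
    exact ⟨⟨hvu, Sym2.mem_mk_left v u⟩, decide_eq_true hu.symm⟩

lemma card_filter_monoEdge_incidenceFinset (ℓ : V → L) (v : V) :
    #{e ∈ G.incidenceFinset v | monoEdge ℓ e} = nbrCount G ℓ v (ℓ v) := by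
  rw [filter_monoEdge_incidenceFinset, card_map, nbrCount]

lemma monoCount_eq_nbrCount_add (ℓ : V → L) (v : V) :
    monoCount G ℓ =
      nbrCount G ℓ v (ℓ v) + #{e ∈ G.edgeFinset \ G.incidenceFinset v | monoEdge ℓ e} := by
  rw [← card_filter_monoEdge_incidenceFinset, ← card_union_of_disjoint, ← filter_union,
    union_sdiff_of_subset (G.incidenceFinset_subset v)]
  · rfl
  · exact disjoint_filter_filter disjoint_sdiff

lemma monoCount_update_add_nbrCount (ℓ : V → L) (v : V) (l : L) :
    monoCount G (Function.update ℓ v l) + nbrCount G ℓ v (ℓ v) =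
      monoCount G ℓ + nbrCount G ℓ v l := by
  have away : {e ∈ G.edgeFinset \ G.incidenceFinset v | monoEdge (Function.update ℓ v l) e} =
      {e ∈ G.edgeFinset \ G.incidenceFinset v | monoEdge ℓ e} :=
    filter_congr fun e he => by
      have hv : v ∉ e := fun hv => (mem_sdiff.mp he).2
        ((G.mem_incidenceFinset v e).mpr ⟨mem_edgeFinset.mp (mem_sdiff.mp he).1, hv⟩)
      rw [monoEdge_update_of_notMem ℓ l hv]
  rw [monoCount_eq_nbrCount_add G _ v, monoCount_eq_nbrCount_add G ℓ v, away,
    nbrCount_update_self, Function.update_self]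
  omega

end

/-- Updating a single vertex to a label strictly more frequent among its neighbors than
its current label strictly increases the number of monochromatic edges. -/
theorem single_update_strict_increase
    {V : Type*} [Fintype V] [DecidableEq V] {L : Type*} [DecidableEq L]
    (G : SimpleGraph V) [DecidableRel G.Adj] (ℓ : V → L) (v : V) (l : L)
    (h : nbrCount G ℓ v l > nbrCount G ℓ v (ℓ v)) :
    monoCount G (Function.update ℓ v l) > monoCount G ℓ := by
  have := monoCount_update_add_nbrCount G ℓ v l
  omega
end

section
/- Let G = (V,E) be a finite simple undirected graph, ℓ a labeling, v a vertex, and l a label with c_ℓ(v,l) ≥ c_ℓ(v,ℓ(v)). If ℓ' is the labeling that agrees with ℓ on all vertices except that ℓ'(v) = l, then f(ℓ') ≥ f(ℓ): in particular, updating a single vertex to any plurality label among its neighbors never decreases the number of monochromatic edges, so every asynchronous label-propagation update is f-nondecreasing. -/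
private lemma incident_count {V : Type*} [Fintype V] [DecidableEq V] {L : Type*} [DecidableEq L]
    (G : SimpleGraph V) [DecidableRel G.Adj] (m : V → L) (v : V) :
    ((G.edgeFinset.filter fun e =>
      Sym2.lift ⟨fun a b => decide (m a = m b),
        fun a b => decide_eq_decide.mpr eq_comm⟩ e = true).filter fun e => v ∈ e).card
      = nbrCount G m v (m v) := by
  unfold nbrCount
  apply Finset.card_bij (fun e he => Sym2.Mem.other' ((Finset.mem_filter.mp he).2))
  · intro e he
    have h1 := Finset.mem_filter.mp he
    have h2 := Finset.mem_filter.mp h1.1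
    have hv : v ∈ e := h1.2
    have hsp := Sym2.other_spec' hv
    rw [SimpleGraph.mem_edgeFinset] at h2
    simp only [Finset.mem_filter, SimpleGraph.mem_neighborFinset]
    constructor
    · have : G.Adj v (Sym2.Mem.other' hv) := by
        rw [← SimpleGraph.mem_edgeSet, hsp]; exact h2.1
      exact this
    · have := h2.2
      rw [← hsp, Sym2.lift_mk] at this
      exact (of_decide_eq_true this).symm
  · intro a ha b hb hab
    have ha1 := Finset.mem_filter.mp ha
    have hb1 := Finset.mem_filter.mp hb
    have hsa := Sym2.other_spec' (ha1.2 : v ∈ a)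
    have hsb := Sym2.other_spec' (hb1.2 : v ∈ b)
    rw [← hsa, ← hsb, hab]
  · intro u hu
    simp only [Finset.mem_filter, SimpleGraph.mem_neighborFinset] at hu
    refine ⟨s(v, u), ?_, ?_⟩
    · refine Finset.mem_filter.mpr ⟨Finset.mem_filter.mpr ⟨?_, ?_⟩, Sym2.mem_mk_left v u⟩
      · rw [SimpleGraph.mem_edgeFinset]; exact hu.1
      · rw [Sym2.lift_mk]; exact decide_eq_true hu.2.symm
    · exact Sym2.congr_right.mp (Sym2.other_spec' _)

/-- Updating a single vertex to a label at least as frequent among its neighbors as its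
current label (in particular, to a plurality label) never decreases the number of
monochromatic edges: every asynchronous label-propagation update is `f`-nondecreasing. -/
theorem single_update_nondecreasing
    {V : Type*} [Fintype V] [DecidableEq V] {L : Type*} [DecidableEq L]
    (G : SimpleGraph V) [DecidableRel G.Adj] (ℓ : V → L) (v : V) (l : L)
    (h : nbrCount G ℓ v l ≥ nbrCount G ℓ v (ℓ v)) :
    monoCount G (Function.update ℓ v l) ≥ monoCount G ℓ := by
  classical
  set m' := Function.update ℓ v l with hm'
  have split : ∀ (m : V → L),
      monoCount G m =
        ((G.edgeFinset.filter fun e =>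
          Sym2.lift ⟨fun a b => decide (m a = m b),
            fun a b => decide_eq_decide.mpr eq_comm⟩ e = true).filter fun e => v ∈ e).card
        + ((G.edgeFinset.filter fun e =>
          Sym2.lift ⟨fun a b => decide (m a = m b),
            fun a b => decide_eq_decide.mpr eq_comm⟩ e = true).filter fun e => ¬ v ∈ e).card := by
    intro m
    exact (Finset.card_filter_add_card_filter_not (fun e => v ∈ e)).symm
  rw [split ℓ, split m']
  have hninc : ((G.edgeFinset.filter fun e =>
          Sym2.lift ⟨fun a b => decide (m' a = m' b),
            fun a b => decide_eq_decide.mpr eq_comm⟩ e = true).filter fun e => ¬ v ∈ e)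
      = ((G.edgeFinset.filter fun e =>
          Sym2.lift ⟨fun a b => decide (ℓ a = ℓ b),
            fun a b => decide_eq_decide.mpr eq_comm⟩ e = true).filter fun e => ¬ v ∈ e) := by
    rw [Finset.filter_filter, Finset.filter_filter]
    apply Finset.filter_congr
    intro e _
    induction e using Sym2.ind with
    | _ a b =>
      simp only [Sym2.lift_mk, Sym2.mem_iff]
      constructor
      · rintro ⟨hmono, hnm⟩
        push_neg at hnm
        rw [hm', Function.update_of_ne (Ne.symm hnm.1), Function.update_of_ne (Ne.symm hnm.2)]
          at hmono
        exact ⟨hmono, by push_neg; exact hnm⟩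
      · rintro ⟨hmono, hnm⟩
        push_neg at hnm
        rw [hm']
        rw [Function.update_of_ne (Ne.symm hnm.1), Function.update_of_ne (Ne.symm hnm.2)]
        exact ⟨hmono, by push_neg; exact hnm⟩
  rw [hninc, incident_count G ℓ v, incident_count G m' v]
  have hnbr : nbrCount G m' v (m' v) = nbrCount G ℓ v l := by
    unfold nbrCount
    congr 1
    apply Finset.filter_congr
    intro u hu
    rw [SimpleGraph.mem_neighborFinset] at hu
    rw [hm', Function.update_of_ne (G.ne_of_adj hu).symm, Function.update_self]
  rw [hnbr]
  exact Nat.add_le_add_right h _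
end

section
/- Let G = (V,E) be a finite simple undirected graph and S ⊆ V an independent set (no edge of G joins two vertices of S). Let ℓ, ℓ' be labelings with ℓ'(u) = ℓ(u) for all u ∉ S, and suppose c_ℓ(v, ℓ'(v)) ≥ c_ℓ(v, ℓ(v)) for every v ∈ S. Then f(ℓ') ≥ f(ℓ). If moreover c_ℓ(v, ℓ'(v)) > c_ℓ(v, ℓ(v)) for at least one v ∈ S, then f(ℓ') > f(ℓ). More precisely, f(ℓ') − f(ℓ) = Σ_{v∈S} (c_ℓ(v, ℓ'(v)) − c_ℓ(v, ℓ(v))). -/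
/-!
Since `S` is independent, every edge of `G` meets `S` in at most one vertex, so the edges of
any subgraph split into those avoiding `S` and, for each `v ∈ S`, those at `v`. Applied to the
monochromatic subgraphs of `ℓ` and `ℓ'`: the edges avoiding `S` are the same for both, and the
monochromatic edges at `v ∈ S` number `c_ℓ(v, ℓ v)` and `c_ℓ(v, ℓ' v)` respectively, because
the neighbors of `v` lie outside `S` and keep their labels.
-/

open Finset

namespace SimpleGraph

variable {V : Type*} [Fintype V] [DecidableEq V]

theorem card_edgeFinset_eq_card_filter_add_sum_degree (H : SimpleGraph V) [DecidableRel H.Adj]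
    {S : Finset V} (hS : H.IsIndepSet S) :
    #H.edgeFinset = #{e ∈ H.edgeFinset | ∀ v ∈ e, v ∉ S} + ∑ v ∈ S, H.degree v := by
  have hmeet :
      {e ∈ H.edgeFinset | ¬ ∀ v ∈ e, v ∉ S} = S.biUnion fun v => H.incidenceFinset v := by
    ext e
    simp only [mem_filter, mem_biUnion, mem_incidenceFinset, incidenceSet, Set.mem_ofPred_eq,
      mem_edgeFinset, not_forall, not_not, exists_prop]
    tauto
  have hdisj : (S : Set V).PairwiseDisjoint fun v => H.incidenceFinset v := fun v hv w hw hvw => by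
    rw [Function.onFun, ← disjoint_coe, coe_incidenceFinset, coe_incidenceFinset,
      Set.disjoint_iff_inter_eq_empty]
    exact H.incidenceSet_inter_incidenceSet_of_not_adj (hS hv hw hvw) hvw
  rw [← card_filter_add_card_filter_not (fun e => ∀ v ∈ e, v ∉ S), hmeet,
    card_biUnion hdisj]
  simp only [card_incidenceFinset_eq_degree]

end SimpleGraph

def monoGraph {V L : Type*} (G : SimpleGraph V) (ℓ : V → L) : SimpleGraph V where
  Adj u v := G.Adj u v ∧ ℓ u = ℓ v
  symm := ⟨fun _ _ h => ⟨h.1.symm, h.2.symm⟩⟩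
  loopless := ⟨fun v h => G.loopless.irrefl v h.1⟩

instance {V L : Type*} [DecidableEq L] (G : SimpleGraph V) [DecidableRel G.Adj] (ℓ : V → L) :
    DecidableRel (monoGraph G ℓ).Adj :=
  fun _ _ => instDecidableAnd

@[simp]
theorem monoGraph_adj {V L : Type*} (G : SimpleGraph V) (ℓ : V → L) (u v : V) :
    (monoGraph G ℓ).Adj u v ↔ G.Adj u v ∧ ℓ u = ℓ v :=
  Iff.rfl

section Labeling

variable {V : Type*} [Fintype V] [DecidableEq V] {L : Type*} [DecidableEq L]
  (G : SimpleGraph V) [DecidableRel G.Adj]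

theorem monoCount_eq_card_edgeFinset_monoGraph (ℓ : V → L) :
    monoCount G ℓ = #(monoGraph G ℓ).edgeFinset := by
  unfold monoCount
  congr 1
  ext e
  induction e using Sym2.ind
  simp

theorem degree_monoGraph (ℓ : V → L) (v : V) :
    (monoGraph G ℓ).degree v = nbrCount G ℓ v (ℓ v) := by
  rw [← SimpleGraph.card_neighborFinset_eq_degree, nbrCount]
  congr 1
  ext u
  simp [eq_comm]

theorem nbrCount_congr {ℓ ℓ' : V → L} {v : V} (h : ∀ u, G.Adj v u → ℓ' u = ℓ u) (l : L) :
    nbrCount G ℓ' v l = nbrCount G ℓ v l := by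
  unfold nbrCount
  congr 1
  refine filter_congr fun u hu => ?_
  rw [h u ((G.mem_neighborFinset v u).1 hu)]

theorem filter_edgeFinset_monoGraph_congr {S : Finset V} {ℓ ℓ' : V → L}
    (hoff : ∀ u ∉ S, ℓ' u = ℓ u) :
    {e ∈ (monoGraph G ℓ').edgeFinset | ∀ v ∈ e, v ∉ S} =
      {e ∈ (monoGraph G ℓ).edgeFinset | ∀ v ∈ e, v ∉ S} := by
  ext e
  induction e using Sym2.ind with
  | _ a b =>
    simp only [mem_filter, SimpleGraph.mem_edgeFinset, SimpleGraph.mem_edgeSet, monoGraph_adj,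
      Sym2.mem_iff, forall_eq_or_imp, forall_eq]
    constructor <;> rintro ⟨⟨hab, hl⟩, ha, hb⟩ <;> refine ⟨⟨hab, ?_⟩, ha, hb⟩
    · rwa [← hoff a ha, ← hoff b hb]
    · rwa [hoff a ha, hoff b hb]

theorem monoCount_add_sum_nbrCount {S : Finset V} (hS : G.IsIndepSet S) {ℓ ℓ' : V → L}
    (hoff : ∀ u ∉ S, ℓ' u = ℓ u) :
    monoCount G ℓ' + ∑ v ∈ S, nbrCount G ℓ v (ℓ v) =
      monoCount G ℓ + ∑ v ∈ S, nbrCount G ℓ v (ℓ' v) := by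
  have hmono : ∀ ℓ₀ : V → L, (monoGraph G ℓ₀).IsIndepSet S :=
    fun ℓ₀ _ hv _ hw hvw hadj => hS hv hw hvw hadj.1
  have hnbr : ∀ v ∈ S, ∀ u, G.Adj v u → ℓ' u = ℓ u :=
    fun v hv u hvu => hoff u fun hu => hS hv hu hvu.ne hvu
  simp only [monoCount_eq_card_edgeFinset_monoGraph,
    SimpleGraph.card_edgeFinset_eq_card_filter_add_sum_degree _ (hmono _),
    filter_edgeFinset_monoGraph_congr G hoff, degree_monoGraph]
  rw [sum_congr rfl fun v hv => nbrCount_congr G (hnbr v hv) (ℓ' v)]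
  ring

end Labeling

/-- Simultaneously updating the labels on an independent set `S`, each vertex moving to a
label at least as frequent among its neighbors as its current one, never decreases the
number of monochromatic edges; if at least one update is strict, the count strictly
increases; and the exact increment is the sum over `S` of the neighbor-count gains. -/
theorem independent_set_update
    {V : Type*} [Fintype V] [DecidableEq V] {L : Type*} [DecidableEq L]
    (G : SimpleGraph V) [DecidableRel G.Adj] (S : Finset V)
    (hS : ∀ u ∈ S, ∀ w ∈ S, ¬ G.Adj u w)
    (ℓ ℓ' : V → L) (hoff : ∀ u ∉ S, ℓ' u = ℓ u)
    (hge : ∀ v ∈ S, nbrCount G ℓ v (ℓ v) ≤ nbrCount G ℓ v (ℓ' v)) :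
    monoCount G ℓ ≤ monoCount G ℓ' ∧
    ((∃ v ∈ S, nbrCount G ℓ v (ℓ v) < nbrCount G ℓ v (ℓ' v)) →
      monoCount G ℓ < monoCount G ℓ') ∧
    (monoCount G ℓ' : ℤ) - (monoCount G ℓ : ℤ) =
      ∑ v ∈ S, ((nbrCount G ℓ v (ℓ' v) : ℤ) - (nbrCount G ℓ v (ℓ v) : ℤ)) := by
  have hcount := monoCount_add_sum_nbrCount G (fun u hu w hw _ => hS u hu w hw) hoff
  refine ⟨?_, fun ⟨v, hv, hlt⟩ => ?_, ?_⟩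
  · have := sum_le_sum hge
    omega
  · have := sum_lt_sum hge ⟨v, hv, hlt⟩
    omega
  · rw [sum_sub_distrib]
    have := congrArg (Nat.cast : ℕ → ℤ) hcount
    push_cast at this
    linarith
end

section
/- Let G = (V,E) be a finite simple undirected graph and let ℓ' be obtained from ℓ by one semi-synchronous LPA pass relative to a proper coloring with color classes D_1,…,D_k. Then f(ℓ') ≥ f(ℓ). Moreover, if during the pass some vertex v changes its label and, at the moment of its update, the neighbor-count of its new label strictly exceeds the neighbor-count of its old label (i.e., the change is not due to a tie), then f(ℓ') > f(ℓ). -/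
/-- `l` is a plurality label at `v` under `ℓ`. -/
def IsPlurality {V : Type*} [Fintype V] [DecidableEq V] {L : Type*} [DecidableEq L]
    (G : SimpleGraph V) [DecidableRel G.Adj] (ℓ : V → L) (v : V) (l : L) : Prop :=
  ∀ l', nbrCount G ℓ v l' ≤ nbrCount G ℓ v l

/-!
Summing neighbor-counts of own labels over all vertices counts every monochromatic edge twice.
When only the vertices of an independent set `S` are relabeled, the monochromatic edges
inside `Sᶜ` are untouched and every other monochromatic edge has exactly one endpoint in `S`,
so `f` changes by `∑ v ∈ S, (c(v, new label) - c(v, old label))`, with all counts taken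
before the stage (the neighbors of `v ∈ S` are outside `S`, so their labels do not move).
A plurality choice makes every summand nonnegative, and a non-tie change makes one positive.
-/

lemma Finset.sum_sum_eq_sum_compl_add_two_nsmul {ι M : Type*} [Fintype ι] [DecidableEq ι]
    [AddCommMonoid M] (f : ι → ι → M) (hf : ∀ i j, f i j = f j i) (S : Finset ι)
    (hS : ∀ i ∈ S, ∀ j ∈ S, f i j = 0) :
    ∑ i, ∑ j, f i j = ∑ i ∈ Sᶜ, ∑ j ∈ Sᶜ, f i j + 2 • ∑ i ∈ S, ∑ j, f i j := by
  have hcross : ∑ i ∈ Sᶜ, ∑ j ∈ S, f i j = ∑ i ∈ S, ∑ j, f i j := by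
    rw [Finset.sum_comm]
    refine Finset.sum_congr rfl fun i hi => ?_
    rw [← Finset.sum_add_sum_compl S (f i), Finset.sum_eq_zero (hS i hi), zero_add]
    exact Finset.sum_congr rfl fun j _ => hf j i
  have hrows : ∑ i ∈ Sᶜ, ∑ j, f i j = ∑ i ∈ Sᶜ, ∑ j ∈ Sᶜ, f i j + ∑ i ∈ S, ∑ j, f i j := by
    rw [← hcross, ← Finset.sum_add_distrib]
    exact Finset.sum_congr rfl fun i _ => by rw [add_comm, Finset.sum_add_sum_compl]
  rw [← Finset.sum_add_sum_compl S, hrows, two_nsmul]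
  abel

namespace SimpleGraph

variable {V : Type*} [Fintype V] [DecidableEq V] {L : Type*} [DecidableEq L]
  (G : SimpleGraph V) [DecidableRel G.Adj]

def monoGraph (ℓ : V → L) : SimpleGraph V where
  Adj u v := G.Adj u v ∧ ℓ u = ℓ v
  symm := ⟨fun _ _ h => ⟨h.1.symm, h.2.symm⟩⟩
  loopless := ⟨fun v h => G.loopless.irrefl v h.1⟩

instance (ℓ : V → L) : DecidableRel (G.monoGraph ℓ).Adj :=
  fun u v => inferInstanceAs (Decidable (G.Adj u v ∧ ℓ u = ℓ v))

lemma monoCount_eq_card_edgeFinset_monoGraph (ℓ : V → L) :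
    monoCount G ℓ = (G.monoGraph ℓ).edgeFinset.card := by
  unfold monoCount
  congr 1
  ext e
  induction e using Sym2.ind
  simp only [Finset.mem_filter, mem_edgeFinset, mem_edgeSet, Sym2.lift_mk, decide_eq_true_eq]
  rfl

lemma degree_monoGraph (ℓ : V → L) (v : V) :
    (G.monoGraph ℓ).degree v = nbrCount G ℓ v (ℓ v) := by
  unfold degree nbrCount
  congr 1
  ext u
  simp only [mem_neighborFinset, Finset.mem_filter, eq_comm (a := ℓ u)]
  rfl

lemma sum_nbrCount_eq_two_mul_monoCount (ℓ : V → L) :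
    ∑ v, nbrCount G ℓ v (ℓ v) = 2 * monoCount G ℓ := by
  simp_rw [monoCount_eq_card_edgeFinset_monoGraph, ← sum_degrees_eq_twice_card_edges,
    degree_monoGraph]

lemma nbrCount_eq_sum_ite (ℓ : V → L) (v : V) (l : L) :
    nbrCount G ℓ v l = ∑ u, if G.Adj v u ∧ ℓ u = l then 1 else 0 := by
  rw [nbrCount, Finset.card_filter, neighborFinset_eq_filter, Finset.sum_filter]
  simp [ite_and]

lemma nbrCount_congr {ℓ ℓ' : V → L} {v : V} (h : ∀ u, G.Adj v u → ℓ' u = ℓ u) (l : L) :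
    nbrCount G ℓ' v l = nbrCount G ℓ v l := by
  unfold nbrCount
  congr 1
  exact Finset.filter_congr fun u hu => by rw [h u ((G.mem_neighborFinset v u).1 hu)]

section IndepSet

variable {G} {S : Finset V} (hS : ∀ u ∈ S, ∀ w ∈ S, ¬ G.Adj u w)
include hS

lemma two_mul_monoCount_eq (ℓ : V → L) :
    2 * monoCount G ℓ = ∑ v ∈ Sᶜ, ∑ u ∈ Sᶜ, (if G.Adj v u ∧ ℓ u = ℓ v then 1 else 0)
      + 2 * ∑ v ∈ S, nbrCount G ℓ v (ℓ v) := by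
  simp_rw [← sum_nbrCount_eq_two_mul_monoCount, nbrCount_eq_sum_ite, ← smul_eq_mul]
  refine Finset.sum_sum_eq_sum_compl_add_two_nsmul _ (fun v u => ?_) S
    (fun v hv u hu => if_neg fun h => hS v hv u hu h.1)
  simp only [G.adj_comm, eq_comm]

lemma monoCount_add_sum_nbrCount_eq {ℓ ℓ' : V → L} (hfix : ∀ v ∉ S, ℓ' v = ℓ v) :
    monoCount G ℓ' + ∑ v ∈ S, nbrCount G ℓ v (ℓ v)
      = monoCount G ℓ + ∑ v ∈ S, nbrCount G ℓ v (ℓ' v) := by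
  have hout : ∑ v ∈ Sᶜ, ∑ u ∈ Sᶜ, (if G.Adj v u ∧ ℓ' u = ℓ' v then 1 else 0)
      = ∑ v ∈ Sᶜ, ∑ u ∈ Sᶜ, (if G.Adj v u ∧ ℓ u = ℓ v then 1 else 0) :=
    Finset.sum_congr rfl fun v hv => Finset.sum_congr rfl fun u hu => by
      rw [hfix v (Finset.mem_compl.1 hv), hfix u (Finset.mem_compl.1 hu)]
  have hin : ∑ v ∈ S, nbrCount G ℓ' v (ℓ' v) = ∑ v ∈ S, nbrCount G ℓ v (ℓ' v) :=
    Finset.sum_congr rfl fun v hv =>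
      nbrCount_congr G (fun u huv => hfix u fun hu => hS v hv u hu huv) _
  have h := two_mul_monoCount_eq hS ℓ
  have h' := two_mul_monoCount_eq hS ℓ'
  rw [hout, hin] at h'
  omega

variable {ℓ ℓ' : V → L} (hfix : ∀ v ∉ S, ℓ' v = ℓ v)
  (hpl : ∀ v ∈ S, IsPlurality G ℓ v (ℓ' v))
include hfix hpl

lemma monoCount_le_of_isPlurality : monoCount G ℓ ≤ monoCount G ℓ' := by
  have := monoCount_add_sum_nbrCount_eq hS hfix
  have : ∑ v ∈ S, nbrCount G ℓ v (ℓ v) ≤ ∑ v ∈ S, nbrCount G ℓ v (ℓ' v) :=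
    Finset.sum_le_sum fun v hv => hpl v hv (ℓ v)
  omega

lemma monoCount_lt_of_isPlurality {v : V} (hv : v ∈ S)
    (hlt : nbrCount G ℓ v (ℓ v) < nbrCount G ℓ v (ℓ' v)) :
    monoCount G ℓ < monoCount G ℓ' := by
  have := monoCount_add_sum_nbrCount_eq hS hfix
  have : ∑ w ∈ S, nbrCount G ℓ w (ℓ w) < ∑ w ∈ S, nbrCount G ℓ w (ℓ' w) :=
    Finset.sum_lt_sum (fun w hw => hpl w hw (ℓ w)) ⟨v, hv, hlt⟩
  omega

end IndepSet

end SimpleGraph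

theorem semiSync_pass_monotone_general
    {V : Type*} [Fintype V] [DecidableEq V] {L : Type*} [DecidableEq L]
    {k : ℕ} (G : SimpleGraph V) [DecidableRel G.Adj]
    (D : Fin k → Finset V)
    (hindep : ∀ j : Fin k, ∀ u ∈ D j, ∀ w ∈ D j, ¬ G.Adj u w)
    (σ : Fin (k + 1) → V → L)
    (hstage : ∀ j : Fin k,
      (∀ v ∈ D j, IsPlurality G (σ j.castSucc) v (σ j.succ v)) ∧
      (∀ v ∉ D j, σ j.succ v = σ j.castSucc v)) :
    monoCount G (σ 0) ≤ monoCount G (σ (Fin.last k)) ∧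
    ((∃ j : Fin k, ∃ v ∈ D j,
        nbrCount G (σ j.castSucc) v (σ j.castSucc v) <
          nbrCount G (σ j.castSucc) v (σ j.succ v)) →
      monoCount G (σ 0) < monoCount G (σ (Fin.last k))) := by
  have hmono : Monotone fun i => monoCount G (σ i) := Fin.monotone_iff_le_succ.2 fun j =>
    SimpleGraph.monoCount_le_of_isPlurality (hindep j) (hstage j).2 (hstage j).1
  refine ⟨hmono (Fin.zero_le _), ?_⟩
  rintro ⟨j, v, hv, hlt⟩
  calc monoCount G (σ 0) ≤ monoCount G (σ j.castSucc) := hmono (Fin.zero_le _)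
    _ < monoCount G (σ j.succ) :=
      SimpleGraph.monoCount_lt_of_isPlurality (hindep j) (hstage j).2 (hstage j).1 hv hlt
    _ ≤ monoCount G (σ (Fin.last k)) := hmono (Fin.le_last _)

/-- One semi-synchronous LPA pass relative to a proper coloring with color classes
`D 0, …, D (k-1)` (stage-by-stage labelings recorded in `σ`, with `σ 0` the initial and
`σ (Fin.last k)` the final labeling) never decreases the monochromatic-edge count; if some
vertex changes its label not due to a tie (the neighbor-count of its new label at its
update time strictly exceeds that of its old label), the count strictly increases. -/
theorem semiSync_pass_monotone
    {V : Type*} [Fintype V] [DecidableEq V] {L : Type*} [DecidableEq L]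
    {k : ℕ} (G : SimpleGraph V) [DecidableRel G.Adj]
    (D : Fin k → Finset V)
    (hpart : ∀ v : V, ∃! j : Fin k, v ∈ D j)
    (hindep : ∀ j : Fin k, ∀ u ∈ D j, ∀ w ∈ D j, ¬ G.Adj u w)
    (σ : Fin (k + 1) → V → L)
    (hstage : ∀ j : Fin k,
      (∀ v ∈ D j, IsPlurality G (σ j.castSucc) v (σ j.succ v)) ∧
      (∀ v ∉ D j, σ j.succ v = σ j.castSucc v)) :
    monoCount G (σ 0) ≤ monoCount G (σ (Fin.last k)) ∧
    ((∃ j : Fin k, ∃ v ∈ D j,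
        nbrCount G (σ j.castSucc) v (σ j.castSucc v) <
          nbrCount G (σ j.castSucc) v (σ j.succ v)) →
      monoCount G (σ 0) < monoCount G (σ (Fin.last k))) :=
  semiSync_pass_monotone_general G D hindep σ hstage
end

section
/- Let G = (V,E) be a finite simple undirected graph with m = |E| edges, and let ℓ_0, ℓ_1, ℓ_2, … be any sequence of labelings in which each ℓ_{i+1} is obtained from ℓ_i by a semi-synchronous LPA pass relative to a fixed proper coloring, with an arbitrary tie-management rule. Then at most m of the passes contain a non-tie change (a vertex changing to a label whose neighbor-count at its update time strictly exceeds that of its old label); consequently there exists a step t ≤ m such that in the pass from ℓ_t to ℓ_{t+1} every vertex that changes its label does so via a tie, i.e., the stop criterion (c1) of the semi-synchronous label propagation algorithm is met within m+1 passes, so the algorithm converges. -/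
open Finset

section AuxLPA
variable {V : Type*} [Fintype V] [DecidableEq V] {L : Type*} [DecidableEq L]
    (G : SimpleGraph V) [DecidableRel G.Adj]

/-- Twice the number of monochromatic edges, counted as ordered adjacent pairs. -/
def lpaF (ℓ : V → L) : ℕ := ∑ v, nbrCount G ℓ v (ℓ v)

lemma nbrCount_eq_sum (ℓ : V → L) (v : V) (l : L) :
    nbrCount G ℓ v l = ∑ u, if G.Adj v u ∧ ℓ u = l then 1 else 0 := by
  have h : (G.neighborFinset v).filter (fun u => ℓ u = l)
      = univ.filter (fun u => G.Adj v u ∧ ℓ u = l) := by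
    ext u; simp [SimpleGraph.mem_neighborFinset]
  rw [nbrCount, h, card_filter]

lemma nbrCount_le_degree (ℓ : V → L) (v : V) (l : L) :
    nbrCount G ℓ v l ≤ G.degree v := by
  rw [← SimpleGraph.card_neighborFinset_eq_degree]
  exact card_filter_le _ _

lemma lpaF_le (ℓ : V → L) : lpaF G ℓ ≤ 2 * G.edgeFinset.card := by
  rw [← SimpleGraph.sum_degrees_eq_twice_card_edges]
  exact Finset.sum_le_sum fun v _ => nbrCount_le_degree G ℓ v (ℓ v)

lemma lpaF_decomp (S : Finset V)
    (hind : ∀ u ∈ S, ∀ w ∈ S, ¬ G.Adj u w)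
    (ℓ ℓ' : V → L) (hoff : ∀ v ∉ S, ℓ' v = ℓ v) :
    lpaF G ℓ' = (∑ v ∈ Sᶜ, ∑ u ∈ Sᶜ, if G.Adj v u ∧ ℓ u = ℓ v then 1 else 0)
      + 2 * ∑ v ∈ S, nbrCount G ℓ v (ℓ' v) := by
  have hsum : lpaF G ℓ' = ∑ v, ∑ u, if G.Adj v u ∧ ℓ' u = ℓ' v then 1 else 0 :=
    Finset.sum_congr rfl fun v _ => nbrCount_eq_sum G ℓ' v (ℓ' v)
  rw [hsum, ← Finset.sum_add_sum_compl S]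
  -- piece A : v ∈ S
  have hA : ∑ v ∈ S, ∑ u, (if G.Adj v u ∧ ℓ' u = ℓ' v then 1 else 0)
      = ∑ v ∈ S, nbrCount G ℓ v (ℓ' v) := by
    refine Finset.sum_congr rfl fun v hv => ?_
    rw [nbrCount_eq_sum]
    refine Finset.sum_congr rfl fun u _ => ?_
    by_cases hadj : G.Adj v u
    · have hu : u ∉ S := fun hu => hind v hv u hu hadj
      rw [hoff u hu]
    · simp [hadj]
  -- split inner sum for v ∈ Sᶜ
  have hsplit : ∑ v ∈ Sᶜ, ∑ u, (if G.Adj v u ∧ ℓ' u = ℓ' v then 1 else 0)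
      = (∑ v ∈ Sᶜ, ∑ u ∈ S, (if G.Adj v u ∧ ℓ' u = ℓ' v then 1 else 0))
        + ∑ v ∈ Sᶜ, ∑ u ∈ Sᶜ, (if G.Adj v u ∧ ℓ' u = ℓ' v then 1 else 0) := by
    rw [← Finset.sum_add_distrib]
    exact Finset.sum_congr rfl fun v _ => (Finset.sum_add_sum_compl S _).symm
  -- piece B : v ∈ Sᶜ, u ∈ S
  have hB : ∑ v ∈ Sᶜ, ∑ u ∈ S, (if G.Adj v u ∧ ℓ' u = ℓ' v then 1 else 0)
      = ∑ v ∈ S, nbrCount G ℓ v (ℓ' v) := by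
    rw [Finset.sum_comm]
    refine Finset.sum_congr rfl fun u hu => ?_
    rw [nbrCount_eq_sum]
    rw [← Finset.sum_add_sum_compl S
      (fun v => if G.Adj u v ∧ ℓ v = ℓ' u then 1 else 0)]
    have hz : ∑ v ∈ S, (if G.Adj u v ∧ ℓ v = ℓ' u then 1 else 0) = 0 := by
      refine Finset.sum_eq_zero fun v hv => ?_
      simp [hind u hu v hv]
    rw [hz, zero_add]
    refine Finset.sum_congr rfl fun v hv => ?_
    have hv' : v ∉ S := by simpa using hv
    have : G.Adj v u ↔ G.Adj u v := G.adj_comm v u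
    rw [hoff v hv']
    by_cases hadj : G.Adj u v
    · simp [hadj, this, eq_comm]
    · simp [hadj, this]
  -- piece C : v ∈ Sᶜ, u ∈ Sᶜ
  have hC : ∑ v ∈ Sᶜ, ∑ u ∈ Sᶜ, (if G.Adj v u ∧ ℓ' u = ℓ' v then 1 else 0)
      = ∑ v ∈ Sᶜ, ∑ u ∈ Sᶜ, (if G.Adj v u ∧ ℓ u = ℓ v then 1 else 0) := by
    refine Finset.sum_congr rfl fun v hv => Finset.sum_congr rfl fun u hu => ?_
    have hv' : v ∉ S := by simpa using hv
    have hu' : u ∉ S := by simpa using hu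
    rw [hoff v hv', hoff u hu']
  rw [hA, hsplit, hB, hC]
  ring

/-- Monotonicity of `lpaF` along one stage. -/
lemma lpaF_stage_mono (S : Finset V)
    (hind : ∀ u ∈ S, ∀ w ∈ S, ¬ G.Adj u w)
    (ℓ ℓ' : V → L) (hoff : ∀ v ∉ S, ℓ' v = ℓ v)
    (hp : ∀ v ∈ S, IsPlurality G ℓ v (ℓ' v)) :
    lpaF G ℓ ≤ lpaF G ℓ' := by
  rw [lpaF_decomp G S hind ℓ ℓ' hoff,
      lpaF_decomp G S hind ℓ ℓ (fun v _ => rfl)]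
  have : ∑ v ∈ S, nbrCount G ℓ v (ℓ v) ≤ ∑ v ∈ S, nbrCount G ℓ v (ℓ' v) :=
    Finset.sum_le_sum fun v hv => hp v hv (ℓ v)
  omega

lemma lpaF_stage_strict (S : Finset V)
    (hind : ∀ u ∈ S, ∀ w ∈ S, ¬ G.Adj u w)
    (ℓ ℓ' : V → L) (hoff : ∀ v ∉ S, ℓ' v = ℓ v)
    (hp : ∀ v ∈ S, IsPlurality G ℓ v (ℓ' v))
    (hstrict : ∃ v ∈ S, nbrCount G ℓ v (ℓ v) < nbrCount G ℓ v (ℓ' v)) :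
    lpaF G ℓ + 2 ≤ lpaF G ℓ' := by
  rw [lpaF_decomp G S hind ℓ ℓ' hoff,
      lpaF_decomp G S hind ℓ ℓ (fun v _ => rfl)]
  have : ∑ v ∈ S, nbrCount G ℓ v (ℓ v) < ∑ v ∈ S, nbrCount G ℓ v (ℓ' v) :=
    Finset.sum_lt_sum (fun v hv => hp v hv (ℓ v)) hstrict
  omega

end AuxLPA

/-- A semi-synchronous pass, recorded stage by stage as `τ : Fin (k+1) → V → L`, contains a
non-tie change: some vertex of some color class changes to a label whose neighbor-count at
its update time strictly exceeds that of its old label. -/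
def NonTiePass {V : Type*} [Fintype V] [DecidableEq V] {L : Type*} [DecidableEq L]
    {k : ℕ} (G : SimpleGraph V) [DecidableRel G.Adj]
    (D : Fin k → Finset V) (τ : Fin (k + 1) → V → L) : Prop :=
  ∃ j : Fin k, ∃ v ∈ D j,
    nbrCount G (τ j.castSucc) v (τ j.castSucc v) <
      nbrCount G (τ j.castSucc) v (τ j.succ v)

/-- In any run of semi-synchronous LPA relative to a fixed proper coloring (pass `i` is
recorded stage by stage as `σ i`, with arbitrary tie management), at most `m = |E|` passes
contain a non-tie change; consequently there is a pass `t ≤ m` in which every label change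
is due to a tie, i.e. stop criterion (c1) is met within `m + 1` passes and the algorithm
converges. -/
theorem semiSync_LPA_converges
    {V : Type*} [Fintype V] [DecidableEq V] {L : Type*} [DecidableEq L]
    {k : ℕ} (G : SimpleGraph V) [DecidableRel G.Adj]
    (D : Fin k → Finset V)
    (hpart : ∀ v : V, ∃! j : Fin k, v ∈ D j)
    (hindep : ∀ j : Fin k, ∀ u ∈ D j, ∀ w ∈ D j, ¬ G.Adj u w)
    (σ : ℕ → Fin (k + 1) → V → L)
    (hlink : ∀ i : ℕ, σ (i + 1) 0 = σ i (Fin.last k))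
    (hstage : ∀ i : ℕ, ∀ j : Fin k,
      (∀ v ∈ D j, IsPlurality G (σ i j.castSucc) v (σ i j.succ v)) ∧
      (∀ v ∉ D j, σ i j.succ v = σ i j.castSucc v)) :
    {i : ℕ | NonTiePass G D (σ i)}.Finite ∧
    {i : ℕ | NonTiePass G D (σ i)}.ncard ≤ G.edgeFinset.card ∧
    ∃ t ≤ G.edgeFinset.card, ¬ NonTiePass G D (σ t) := by
  classical
  set m := G.edgeFinset.card with hm
  set P : ℕ → Prop := fun i => NonTiePass G D (σ i) with hP
  set N : ℕ → ℕ := fun i => lpaF G (σ i 0) with hN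
  -- one stage is monotone
  have hstep : ∀ i : ℕ, ∀ j : Fin k,
      lpaF G (σ i j.castSucc) ≤ lpaF G (σ i j.succ) := fun i j =>
    lpaF_stage_mono G (D j) (hindep j) _ _ (hstage i j).2 (hstage i j).1
  -- from stage 0 up to any stage
  have hmono0 : ∀ i : ℕ, ∀ j : Fin (k + 1), lpaF G (σ i 0) ≤ lpaF G (σ i j) := by
    intro i j
    induction j using Fin.induction with
    | zero => exact le_refl _
    | succ j ih => exact le_trans ih (hstep i j)
  -- from any stage up to the last
  have hmonoLast : ∀ i : ℕ, ∀ j : Fin (k + 1),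
      lpaF G (σ i j) ≤ lpaF G (σ i (Fin.last k)) := by
    intro i j
    induction j using Fin.reverseInduction with
    | last => exact le_refl _
    | cast j ih => exact le_trans (hstep i j) ih
  -- pass monotone
  have hNmono : ∀ i : ℕ, N i ≤ N (i + 1) := by
    intro i
    show lpaF G (σ i 0) ≤ lpaF G (σ (i + 1) 0)
    rw [hlink i]
    exact hmono0 i (Fin.last k)
  -- strict increase on non-tie passes
  have hNstrict : ∀ i : ℕ, P i → N i + 2 ≤ N (i + 1) := by
    intro i hPi
    obtain ⟨j, v, hv, hlt⟩ := hPi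
    show lpaF G (σ i 0) + 2 ≤ lpaF G (σ (i + 1) 0)
    rw [hlink i]
    calc lpaF G (σ i 0) + 2 ≤ lpaF G (σ i j.castSucc) + 2 := by
          have := hmono0 i j.castSucc; omega
      _ ≤ lpaF G (σ i j.succ) :=
          lpaF_stage_strict G (D j) (hindep j) _ _ (hstage i j).2 (hstage i j).1
            ⟨v, hv, hlt⟩
      _ ≤ lpaF G (σ i (Fin.last k)) := hmonoLast i j.succ
  -- counting claim
  have hcount : ∀ n : ℕ,
      N 0 + 2 * ((Finset.range n).filter fun i => P i).card ≤ N n := by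
    intro n
    induction n with
    | zero => simp
    | succ n ih =>
      rw [Finset.range_add_one, Finset.filter_insert]
      by_cases h : P n
      · rw [if_pos h, Finset.card_insert_of_notMem (by simp)]
        have := hNstrict n h
        omega
      · rw [if_neg h]
        have := hNmono n
        omega
  have hcard : ∀ n : ℕ, ((Finset.range n).filter fun i => P i).card ≤ m := by
    intro n
    have h1 := hcount n
    have h2 : N n ≤ 2 * m := lpaF_le G (σ n 0)
    omega
  -- finiteness
  have hfin : {i : ℕ | P i}.Finite := by
    by_contra hinf
    have hinf' : Set.Infinite {i : ℕ | P i} := hinf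
    obtain ⟨t, hts, htc⟩ := hinf'.exists_subset_card_eq (m + 1)
    have hsub : t ⊆ (Finset.range (t.sup id + 1)).filter fun i => P i := by
      intro i hi
      refine Finset.mem_filter.mpr ⟨Finset.mem_range.mpr ?_, hts hi⟩
      have h3 : i ≤ t.sup id := Finset.le_sup (f := id) hi
      omega
    have := Finset.card_le_card hsub
    have := hcard (t.sup id + 1)
    omega
  refine ⟨hfin, ?_, ?_⟩
  · -- ncard bound
    rw [Set.ncard_eq_toFinset_card _ hfin]
    have hsub : hfin.toFinset ⊆
        (Finset.range (hfin.toFinset.sup id + 1)).filter fun i => P i := by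
      intro i hi
      refine Finset.mem_filter.mpr ⟨Finset.mem_range.mpr ?_, ?_⟩
      · have h3 : i ≤ hfin.toFinset.sup id := Finset.le_sup (f := id) hi
        omega
      · exact hfin.mem_toFinset.mp hi
    calc hfin.toFinset.card ≤ _ := Finset.card_le_card hsub
      _ ≤ m := hcard _
  · -- existence of a tie-only pass
    by_contra h
    push_neg at h
    have hall : ∀ i ∈ Finset.range (m + 1), P i := by
      intro i hi
      have := Finset.mem_range.mp hi
      exact h i (by omega)
    have heq : ((Finset.range (m + 1)).filter fun i => P i).card = m + 1 := by
      rw [Finset.filter_true_of_mem hall, Finset.card_range]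
    have := hcard (m + 1)
    omega
end

section
/- Let G = (V,E) be a finite simple undirected graph, L a finite linearly ordered set of labels, and F the synchronous LPA-Max update defined by F(ℓ)(v) = the maximum, in the order on L, among the plurality labels at v under ℓ, simultaneously for all vertices v. Then for every initial labeling ℓ the trajectory ℓ, F(ℓ), F²(ℓ), … is eventually periodic with period at most 2: there exists t such that F^{t+2}(ℓ) = F^t(ℓ). (Synchronous LPA-Max does not generate cycles of size larger than two.) -/
instance {V : Type*} [Fintype V] [DecidableEq V] {L : Type*} [DecidableEq L] [Fintype L]
    (G : SimpleGraph V) [DecidableRel G.Adj] (ℓ : V → L) (v : V) :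
    DecidablePred (IsPlurality G ℓ v) := fun l =>
  inferInstanceAs (Decidable (∀ l', nbrCount G ℓ v l' ≤ nbrCount G ℓ v l))

/-- The synchronous LPA-Max update: simultaneously for all vertices, `ℓ v` is replaced by
the maximum (in the linear order on `L`) among the plurality labels at `v` under `ℓ`. -/
def lpaMaxUpdate {V : Type*} [Fintype V] [DecidableEq V] {L : Type*} [Fintype L]
    [LinearOrder L] (G : SimpleGraph V) [DecidableRel G.Adj] (ℓ : V → L) : V → L :=
  fun v => ((Finset.univ.filter fun l => IsPlurality G ℓ v l).max).getD (ℓ v)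

section Aux

open Finset

variable {V : Type*} [Fintype V] [DecidableEq V] {L : Type*} [Fintype L] [LinearOrder L]
  (G : SimpleGraph V) [DecidableRel G.Adj]

lemma plurality_filter_nonempty (ℓ : V → L) (v : V) :
    (Finset.univ.filter fun l => IsPlurality G ℓ v l).Nonempty := by
  have : Nonempty L := ⟨ℓ v⟩
  obtain ⟨b, -, hb⟩ := Finset.exists_max_image (Finset.univ : Finset L)
    (fun l => nbrCount G ℓ v l) Finset.univ_nonempty
  exact ⟨b, Finset.mem_filter.2 ⟨Finset.mem_univ _, fun l' => hb l' (Finset.mem_univ _)⟩⟩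

lemma update_isPlurality (ℓ : V → L) (v : V) :
    IsPlurality G ℓ v (lpaMaxUpdate G ℓ v) := by
  have hne := plurality_filter_nonempty G ℓ v
  obtain ⟨m, hm⟩ := Finset.max_of_nonempty hne
  have hmem : m ∈ Finset.univ.filter fun l => IsPlurality G ℓ v l :=
    Finset.mem_of_max hm
  have : lpaMaxUpdate G ℓ v = m := by unfold lpaMaxUpdate; rw [hm]; rfl
  rw [this]
  exact (Finset.mem_filter.1 hmem).2

lemma le_update_of_isPlurality (ℓ : V → L) (v : V) {l : L}
    (h : IsPlurality G ℓ v l) : l ≤ lpaMaxUpdate G ℓ v := by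
  have hne := plurality_filter_nonempty G ℓ v
  obtain ⟨m, hm⟩ := Finset.max_of_nonempty hne
  have : lpaMaxUpdate G ℓ v = m := by unfold lpaMaxUpdate; rw [hm]; rfl
  rw [this]
  exact Finset.le_max_of_eq (Finset.mem_filter.2 ⟨Finset.mem_univ _, h⟩) hm

/-- The energy of a pair of labelings. -/
def energy (a b : V → L) : ℕ := ∑ v, nbrCount G a v (b v)

lemma energy_eq (a b : V → L) :
    energy G a b = ∑ v, ∑ u, (if G.Adj v u ∧ a u = b v then 1 else 0) := by
  unfold energy nbrCount
  refine Finset.sum_congr rfl fun v _ => ?_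
  rw [Finset.card_filter, SimpleGraph.neighborFinset_eq_filter, Finset.sum_filter]
  refine Finset.sum_congr rfl fun u _ => ?_
  by_cases h1 : G.Adj v u <;> by_cases h2 : a u = b v <;> simp [h1, h2]

lemma energy_symm (a b : V → L) : energy G a b = energy G b a := by
  rw [energy_eq, energy_eq, Finset.sum_comm]
  refine Finset.sum_congr rfl fun u _ => Finset.sum_congr rfl fun v _ => ?_
  exact if_congr (by rw [G.adj_comm]; exact and_congr_right' eq_comm) rfl rfl

lemma energy_le_update (a m : V → L) :
    energy G a m ≤ energy G a (lpaMaxUpdate G a) :=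
  Finset.sum_le_sum fun v _ => update_isPlurality G a v (m v)

lemma energy_le_bound (a b : V → L) :
    energy G a b ≤ ∑ v, (G.neighborFinset v).card :=
  Finset.sum_le_sum fun v _ => Finset.card_filter_le _ _

/-- A monotone, bounded sequence of naturals is eventually constant. -/
lemma monotone_bounded_eventually_const {e : ℕ → ℕ} (hm : Monotone e) {B : ℕ}
    (hb : ∀ t, e t ≤ B) : ∃ T, ∀ t, T ≤ t → e t = e T := by
  have hbdd : BddAbove (Set.range e) := ⟨B, by rintro x ⟨t, rfl⟩; exact hb t⟩
  have hmem : sSup (Set.range e) ∈ Set.range e :=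
    Nat.sSup_mem ⟨e 0, 0, rfl⟩ hbdd
  obtain ⟨T, hT⟩ := hmem
  refine ⟨T, fun t ht => le_antisymm ?_ (hm ht)⟩
  rw [hT]; exact le_csSup hbdd ⟨t, rfl⟩

/-- A monotone, bounded sequence of naturals has a repeat at consecutive times. -/
lemma monotone_bounded_exists_eq_succ {h : ℕ → ℕ} (hm : Monotone h) {B : ℕ}
    (hb : ∀ k, h k ≤ B) : ∃ k, h (k + 1) = h k := by
  by_contra hc
  push_neg at hc
  have hs : StrictMono h := strictMono_nat_of_lt_succ fun k =>
    lt_of_le_of_ne (hm (Nat.le_succ k)) (Ne.symm (hc k))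
  have h1 : B + 1 ≤ h (B + 1) := hs.le_apply
  have h2 := hb (B + 1)
  omega

lemma filter_le_subset {l l' : L} (h : l ≤ l') :
    (Finset.univ.filter fun x : L => x ≤ l) ⊆ (Finset.univ.filter fun x : L => x ≤ l') :=
  fun x hx => Finset.mem_filter.2
    ⟨Finset.mem_univ _, le_trans (Finset.mem_filter.1 hx).2 h⟩

end Aux

/-- Synchronous LPA-Max does not generate cycles of size larger than two: for every
initial labeling `ℓ`, the trajectory `ℓ, F ℓ, F² ℓ, …` is eventually periodic with period
at most 2. -/
theorem lpaMax_eventually_period_two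
    {V : Type*} [Fintype V] [DecidableEq V] {L : Type*} [Fintype L] [LinearOrder L]
    (G : SimpleGraph V) [DecidableRel G.Adj] (ℓ : V → L) :
    ∃ t : ℕ, (lpaMaxUpdate G)^[t + 2] ℓ = (lpaMaxUpdate G)^[t] ℓ := by
  classical
  set F : (V → L) → V → L := lpaMaxUpdate G with hF
  set s : ℕ → V → L := fun t => F^[t] ℓ with hs
  have hstep : ∀ t, s (t + 1) = F (s t) := fun t => Function.iterate_succ_apply' F t ℓ
  set e : ℕ → ℕ := fun t => energy G (s t) (s (t + 1)) with he
  have emono : Monotone e := by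
    apply monotone_nat_of_le_succ
    intro t
    calc e t = energy G (s (t + 1)) (s t) := energy_symm G _ _
    _ ≤ energy G (s (t + 1)) (F (s (t + 1))) := energy_le_update G _ _
    _ = e (t + 1) := by
        show _ = energy G (s (t + 1)) (s (t + 1 + 1))
        rw [hstep (t + 1)]
  have ebdd : ∀ t, e t ≤ ∑ v, (G.neighborFinset v).card := fun t => energy_le_bound G _ _
  obtain ⟨T, hT⟩ := monotone_bounded_eventually_const emono ebdd
  -- key pointwise inequality
  have key : ∀ t, T ≤ t → ∀ v, s t v ≤ s (t + 2) v := by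
    intro t ht v
    have hs2 : s (t + 2) = F (s (t + 1)) := hstep (t + 1)
    have e1 : e t = e (t + 1) := by
      rw [hT t ht, hT (t + 1) (ht.trans (Nat.le_succ t))]
    have h1 : energy G (s (t + 1)) (s t) = energy G (s (t + 1)) (s (t + 2)) := by
      rw [energy_symm G (s (t + 1)) (s t)]
      exact e1
    have hle : ∀ w ∈ Finset.univ, nbrCount G (s (t + 1)) w (s t w) ≤
        nbrCount G (s (t + 1)) w (s (t + 2) w) := by
      intro w _
      rw [hs2]
      exact update_isPlurality G (s (t + 1)) w (s t w)
    have heqw := (Finset.sum_eq_sum_iff_of_le hle).1 h1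
    have hplur : IsPlurality G (s (t + 1)) v (s t v) := by
      intro l'
      rw [heqw v (Finset.mem_univ v), hs2]
      exact update_isPlurality G (s (t + 1)) v l'
    rw [hs2]
    exact le_update_of_isPlurality G (s (t + 1)) v hplur
  -- second Lyapunov: sum of ranks
  set h : ℕ → ℕ := fun k => ∑ v, (Finset.univ.filter fun l => l ≤ s (T + 2 * k) v).card
    with hh
  have hptle : ∀ k v, s (T + 2 * k) v ≤ s (T + 2 * (k + 1)) v := by
    intro k v
    have : T + 2 * (k + 1) = T + 2 * k + 2 := by ring
    rw [this]
    exact key _ (Nat.le_add_right _ _) v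
  have hmono : Monotone h := by
    apply monotone_nat_of_le_succ
    intro k
    exact Finset.sum_le_sum fun v _ => Finset.card_le_card (filter_le_subset (hptle k v))
  have hbdd : ∀ k, h k ≤ ∑ _v : V, Fintype.card L := fun k =>
    Finset.sum_le_sum fun v _ =>
      le_trans (Finset.card_filter_le _ _) (le_of_eq Finset.card_univ)
  obtain ⟨k, hk⟩ := monotone_bounded_exists_eq_succ hmono hbdd
  refine ⟨T + 2 * k, ?_⟩
  have hcards : ∀ v ∈ Finset.univ,
      (Finset.univ.filter fun l => l ≤ s (T + 2 * k) v).card =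
      (Finset.univ.filter fun l => l ≤ s (T + 2 * (k + 1)) v).card := by
    apply (Finset.sum_eq_sum_iff_of_le fun v _ =>
      Finset.card_le_card (filter_le_subset (hptle k v))).1
    exact hk.symm
  have hfun : s (T + 2 * k + 2) = s (T + 2 * k) := by
    have h1 : T + 2 * (k + 1) = T + 2 * k + 2 := by ring
    funext v
    have hsub : (Finset.univ.filter fun l => l ≤ s (T + 2 * k) v) ⊆
        (Finset.univ.filter fun l => l ≤ s (T + 2 * (k + 1)) v) :=
      filter_le_subset (hptle k v)
    have heq := Finset.eq_of_subset_of_card_le hsub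
      (le_of_eq (hcards v (Finset.mem_univ v)).symm)
    have hmem : s (T + 2 * (k + 1)) v ∈
        (Finset.univ.filter fun l => l ≤ s (T + 2 * (k + 1)) v) :=
      Finset.mem_filter.2 ⟨Finset.mem_univ _, le_refl _⟩
    rw [← heq] at hmem
    have := (Finset.mem_filter.1 hmem).2
    rw [h1] at this
    have h2 := hptle k v
    rw [h1] at h2
    exact le_antisymm this h2
  show F^[T + 2 * k + 2] ℓ = F^[T + 2 * k] ℓ
  exact hfun
end
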